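/- arXiv:2408.06801 — 2 statements merged into one kernel-verified Lean document; each statement's English description precedes it below -/
import Mathlib

section
/- Algebraic–exponential decay of the approximate rarefaction wave outside the fan (Lemma 2.2, part (5)): For every ε ∈ (0,1) there exists a positive constant C_ε such that for all t ≥ 1: |u^R(t,x) − u_+| ≤ C_ε δ_R^{2ε/(2+ε)} t^{−1+ε} e^{−ε|x − λ_+ t|} for all x ≥ λ_+ t, and |u^R(t,x) − u_m| ≤ C_ε δ_R^{2ε/(2+ε)} t^{−1+ε} e^{−ε|x − λ_m t|} for all x ≤ λ_m t. -/
/-!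
Write `c = (λ₊ - λₘ)/2` and `a = x₀(t,x)`, so that `λ₊ - w₀(a) = c (1 - tanh a)`, and
`e^{-2a} ≤ 1 - tanh a ≤ 2 e^{-2a}` for `a ≥ 0`. If `x ≥ λ₊ t`, the characteristic equation gives
`0 ≤ x - λ₊ t = a - c (1 - tanh a) t`, so `c t e^{-2a} ≤ a ≤ e^{εa}/ε`, i.e. `t ≲ e^{(2+ε)a}`,
whence `e^{-2a} ≲ t^{-1+ε} e^{-εa} ≤ t^{-1+ε} e^{-ε|x - λ₊ t|}`. As `√` is Lipschitz on
`[uₘ², ∞)`, this bounds `|u^R - u₊|`. The side `x ≤ λₘ t` is the same argument for `-a`, since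
`w₀(a) - λₘ = c (1 - tanh (-a))`. The factor `δ_R^{2ε/(2+ε)}` is absorbed into the constant.
-/

open Real

theorem one_sub_tanh_eq (y : ℝ) : 1 - tanh y = 2 / (exp (2 * y) + 1) := by
  have h : exp (2 * y) = exp y * exp y := by rw [← exp_add]; ring_nf
  rw [tanh_eq, h, exp_neg]
  field_simp
  ring

theorem one_sub_tanh_le (y : ℝ) : 1 - tanh y ≤ 2 * exp (-(2 * y)) := by
  rw [one_sub_tanh_eq, exp_neg, ← div_eq_mul_inv]
  gcongr
  linarith

theorem exp_neg_two_mul_le_one_sub_tanh {y : ℝ} (hy : 0 ≤ y) : exp (-(2 * y)) ≤ 1 - tanh y := by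
  have h1 : 1 ≤ exp (2 * y) := one_le_exp (by linarith)
  rw [one_sub_tanh_eq, exp_neg, le_div_iff₀ (by positivity), inv_mul_eq_div,
    div_le_iff₀ (by positivity)]
  linarith

theorem abs_sqrt_sub_sqrt_le {m a b : ℝ} (hm : 0 < m) (ha : m ^ 2 ≤ a) (hb : m ^ 2 ≤ b) :
    |√a - √b| ≤ |a - b| / (2 * m) := by
  have hsa : m ≤ √a := le_sqrt_of_sq_le ha
  have hsb : m ≤ √b := le_sqrt_of_sq_le hb
  have hdiff : (√a - √b) * (√a + √b) = a - b := by
    linear_combination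
      mul_self_sqrt ((sq_nonneg m).trans ha) - mul_self_sqrt ((sq_nonneg m).trans hb)
  rw [le_div_iff₀ (by positivity), ← hdiff, abs_mul, abs_of_pos (by linarith : 0 < √a + √b)]
  gcongr
  linarith

theorem exp_neg_two_mul_le_of_mul_exp_neg_le {c ε t b : ℝ} (hc : 0 < c) (hε0 : 0 < ε)
    (hε1 : ε ≤ 1) (ht : 0 < t) (hb : c * t * exp (-(2 * b)) ≤ b) :
    exp (-(2 * b)) ≤ (ε * c) ^ (-1 + ε) * t ^ (-1 + ε) * exp (-ε * b) := by
  have hb0 : 0 ≤ b := le_trans (by positivity) hb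
  have hεct : ε * c * t ≤ exp ((2 + ε) * b) := by
    have hct : c * t ≤ b * exp (2 * b) := by
      rwa [exp_neg, ← div_eq_mul_inv, div_le_iff₀ (exp_pos _)] at hb
    calc ε * c * t ≤ ε * (b * exp (2 * b)) := by rw [mul_assoc]; gcongr
      _ ≤ exp (ε * b) * exp (2 * b) := by
        rw [← mul_assoc]; gcongr; linarith [add_one_le_exp (ε * b)]
      _ = exp ((2 + ε) * b) := by rw [← exp_add]; ring_nf
  have hpow : (ε * c * t) ^ (1 - ε) ≤ exp ((2 - ε) * b) :=
    calc (ε * c * t) ^ (1 - ε) ≤ exp ((2 + ε) * b) ^ (1 - ε) := by gcongr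
      _ = exp ((2 + ε) * b * (1 - ε)) := by rw [← exp_mul]
      _ ≤ exp ((2 - ε) * b) := exp_le_exp.2 (by nlinarith [mul_nonneg (sq_nonneg ε) hb0])
  calc exp (-(2 * b)) = (exp ((2 - ε) * b))⁻¹ * exp (-ε * b) := by
        rw [← exp_neg, ← exp_add]; ring_nf
    _ ≤ ((ε * c * t) ^ (1 - ε))⁻¹ * exp (-ε * b) := by gcongr
    _ = (ε * c) ^ (-1 + ε) * t ^ (-1 + ε) * exp (-ε * b) := by
        rw [← rpow_neg (by positivity), mul_rpow (by positivity) ht.le, neg_sub, sub_eq_neg_add]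

theorem abs_sqrt_sub_sqrt_le_of_tanh_gap {c m ε t b d l w : ℝ} (hc : 0 < c) (hm : 0 < m)
    (hε0 : 0 < ε) (hε1 : ε ≤ 1) (ht : 0 < t) (hl : m ^ 2 ≤ l / 3) (hw : m ^ 2 ≤ w / 3)
    (hgap : |w - l| = c * (1 - tanh b)) (hd0 : 0 ≤ d) (hdb : d + |w - l| * t ≤ b) :
    |√(w / 3) - √(l / 3)| ≤ c / (3 * m) * (ε * c) ^ (-1 + ε) * t ^ (-1 + ε) * exp (-ε * d) := by
  have hgap0 : 0 ≤ |w - l| * t := by positivity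
  have hb0 : 0 ≤ b := by linarith
  have hfoot : c * t * exp (-(2 * b)) ≤ b :=
    calc c * t * exp (-(2 * b)) ≤ c * t * (1 - tanh b) := by
          gcongr; exact exp_neg_two_mul_le_one_sub_tanh hb0
      _ = |w - l| * t := by rw [hgap]; ring
      _ ≤ b := by linarith
  calc |√(w / 3) - √(l / 3)| ≤ |w / 3 - l / 3| / (2 * m) := abs_sqrt_sub_sqrt_le hm hw hl
    _ = c / (6 * m) * (1 - tanh b) := by
        rw [← sub_div, abs_div, hgap, abs_of_pos (by norm_num : (0 : ℝ) < 3)]; ring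
    _ ≤ c / (6 * m) * (2 * exp (-(2 * b))) := by gcongr; exact one_sub_tanh_le b
    _ = c / (3 * m) * exp (-(2 * b)) := by ring
    _ ≤ c / (3 * m) * ((ε * c) ^ (-1 + ε) * t ^ (-1 + ε) * exp (-ε * b)) := by
        gcongr; exact exp_neg_two_mul_le_of_mul_exp_neg_le hc hε0 hε1 ht hfoot
    _ ≤ c / (3 * m) * ((ε * c) ^ (-1 + ε) * t ^ (-1 + ε) * exp (-ε * d)) := by
        gcongr c / (3 * m) * (_ * exp ?_); nlinarith
    _ = c / (3 * m) * (ε * c) ^ (-1 + ε) * t ^ (-1 + ε) * exp (-ε * d) := by ring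

section Profile

variable {m lm lp ε t a w x : ℝ}

theorem abs_sqrt_profile_sub_right_le (hm : 0 < m) (hlm : lm = 3 * m ^ 2) (hlmp : lm < lp)
    (hε0 : 0 < ε) (hε1 : ε ≤ 1) (ht : 0 < t)
    (hw : w = (lp + lm) / 2 + (lp - lm) / 2 * tanh a) (hx : x = a + w * t) (hxt : lp * t ≤ x) :
    |√(w / 3) - √(lp / 3)| ≤ (lp - lm) / 2 / (3 * m) * (ε * ((lp - lm) / 2)) ^ (-1 + ε) *
      t ^ (-1 + ε) * exp (-ε * |x - lp * t|) := by
  have hgap : lp - w = (lp - lm) / 2 * (1 - tanh a) := by rw [hw]; ring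
  have hgap0 : 0 ≤ lp - w := by
    rw [hgap]; exact mul_nonneg (by linarith) (by linarith [tanh_lt_one a])
  have hlw : lm ≤ w := by
    rw [hw]; nlinarith [neg_one_lt_tanh a]
  refine abs_sqrt_sub_sqrt_le_of_tanh_gap (b := a) (by linarith) hm hε0 hε1 ht (by linarith)
    (by linarith) (by rw [abs_sub_comm, abs_of_nonneg hgap0, hgap]) (abs_nonneg _) ?_
  rw [abs_of_nonneg (by linarith), abs_sub_comm, abs_of_nonneg hgap0, hx]
  exact le_of_eq (by ring)

theorem abs_sqrt_profile_sub_left_le (hm : 0 < m) (hlm : lm = 3 * m ^ 2) (hlmp : lm < lp)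
    (hε0 : 0 < ε) (hε1 : ε ≤ 1) (ht : 0 < t)
    (hw : w = (lp + lm) / 2 + (lp - lm) / 2 * tanh a) (hx : x = a + w * t) (hxt : x ≤ lm * t) :
    |√(w / 3) - √(lm / 3)| ≤ (lp - lm) / 2 / (3 * m) * (ε * ((lp - lm) / 2)) ^ (-1 + ε) *
      t ^ (-1 + ε) * exp (-ε * |x - lm * t|) := by
  have hgap : w - lm = (lp - lm) / 2 * (1 - tanh (-a)) := by rw [hw, tanh_neg]; ring
  have hgap0 : 0 ≤ w - lm := by
    rw [hgap]; exact mul_nonneg (by linarith) (by linarith [tanh_lt_one (-a)])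
  refine abs_sqrt_sub_sqrt_le_of_tanh_gap (b := -a) (by linarith) hm hε0 hε1 ht (by linarith)
    (by linarith) (by rw [abs_of_nonneg hgap0, hgap]) (abs_nonneg _) ?_
  rw [abs_of_nonpos (by linarith), abs_of_nonneg hgap0, hx]
  exact le_of_eq (by ring)

end Profile

/-- Algebraic–exponential decay of the approximate rarefaction wave outside the fan
(Lemma 2.2, part (5)). -/
theorem rarefaction_outside_fan_decay
    (um up lm lp dR : ℝ) (h0 : 0 < um) (hup : um < up)
    (hlm : lm = 3 * um ^ 2) (hlp : lp = 3 * up ^ 2) (hdR : dR = up - um)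
    (w0 : ℝ → ℝ) (hw0 : ∀ x, w0 x = (lp + lm) / 2 + (lp - lm) / 2 * Real.tanh x)
    (x0 : ℝ → ℝ → ℝ) (hx0 : ∀ t, 0 ≤ t → ∀ x, x = x0 t x + w0 (x0 t x) * t)
    (uR : ℝ → ℝ → ℝ) (huR : ∀ t x, uR t x = Real.sqrt (w0 (x0 t x) / 3)) :
    ∀ ε : ℝ, 0 < ε → ε < 1 → ∃ C > 0, ∀ t : ℝ, 1 ≤ t →
      (∀ x : ℝ, lp * t ≤ x →
        |uR t x - up| ≤ C * dR ^ (2 * ε / (2 + ε)) * t ^ (-1 + ε) * Real.exp (-ε * |x - lp * t|)) ∧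
      (∀ x : ℝ, x ≤ lm * t →
        |uR t x - um| ≤ C * dR ^ (2 * ε / (2 + ε)) * t ^ (-1 + ε) * Real.exp (-ε * |x - lm * t|)) := by
  intro ε hε0 hε1
  have hlmp : lm < lp := by rw [hlm, hlp]; nlinarith
  have hum : um = √(lm / 3) := by rw [hlm, mul_div_cancel_left₀ _ three_ne_zero, sqrt_sq h0.le]
  have hup' : up = √(lp / 3) := by
    rw [hlp, mul_div_cancel_left₀ _ three_ne_zero, sqrt_sq (h0.trans hup).le]
  have hdR0 : 0 < dR ^ (2 * ε / (2 + ε)) := rpow_pos_of_pos (by linarith) _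
  set A := (lp - lm) / 2 / (3 * um) * (ε * ((lp - lm) / 2)) ^ (-1 + ε)
  have hA : 0 < A := by have := sub_pos.2 hlmp; positivity
  refine ⟨A / dR ^ (2 * ε / (2 + ε)), by positivity, fun t ht => ⟨fun x hx => ?_, fun x hx => ?_⟩⟩
  all_goals rw [div_mul_cancel₀ _ hdR0.ne', huR]
  · rw [hup']
    exact abs_sqrt_profile_sub_right_le h0 hlm hlmp hε0 hε1.le (by linarith) (hw0 _)
      (hx0 t (by linarith) x) hx
  · rw [hum]
    exact abs_sqrt_profile_sub_left_le h0 hlm hlmp hε0 hε1.le (by linarith) (hw0 _)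
      (hx0 t (by linarith) x) hx
end

section
/- Estimate of the cubic and cross terms N(t) (Lemma 4.6): Fix t ≥ 0 and set v(ξ) := u^R(1+t, ξ + σt). Let ε > 0 and let φ : ℝ → ℝ be continuously differentiable with ‖φ‖_{H¹(ℝ)} ≤ ε, and set Ẋ := (32/(25u_m²)) ∫_ℝ φ w(u^S) (u^S)′ dξ. Define N := Ẋ ∫_ℝ φ w(u^S) v′ dξ − (Ẋ/2) ∫_ℝ φ² w′(u^S) (u^S)′ dξ + ∫_ℝ φ³ w(u^S) ((u^S)′ + v′) dξ − 2 ∫_ℝ φ³ (u^S + v − u_m) w′(u^S) (u^S)′ dξ − 3 ∫_ℝ φ² (v − u_m) u^S w′(u^S) (u^S)′ dξ. Then |N| ≤ (36√2 + (35√2)/2) u_m² ε ∫_ℝ φ² (u^S)′ dξ + (5√2 u_m δ_R ε + 15 u_m² δ_R) ∫_ℝ φ² (u^S)′ dξ + (√2 ε + (48/5) δ_R) ∫_ℝ φ² w(u^S) v′ dξ + (25/128) u_m² Ẋ². -/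
/-!
Every term of `N` is an integral against `(u^S)′ ≥ 0` or `v′ ≥ 0`, with bounded coefficients:
`|φ| ≤ ε` by the one-dimensional Sobolev inequality, `0 ≤ w ≤ 15 u_m² / 2` and
`|w′| ≤ 5 u_m / 2` on the range `(-2 u_m, u_m)` of `u^S`, and `u_m ≤ v ≤ u_+`. Both `u^S` and `v`
are monotone and bounded, so their derivatives are integrable with total mass at most the
oscillation (`3 u_m`, resp. `δ_R`); no formula for `v′` is needed. Hence `|Ẋ| ≤ 144 u_m ε / 5`,
the cross term `Ẋ ∫ φ w(u^S) v′` is split by Young's inequality, and all other terms are bounded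
by `ε` or `δ_R` times `∫ φ² (u^S)′` or `∫ φ² w(u^S) v′`; the stated constants, with `√2 ≥ 1`,
dominate the resulting ones.
-/

open MeasureTheory Filter Set

theorem sq_le_integral_sq_add_integral_deriv_sq {φ : ℝ → ℝ} (hφ : ContDiff ℝ 1 φ)
    (h2 : Integrable fun x => φ x ^ 2) (h'2 : Integrable fun x => deriv φ x ^ 2) (x : ℝ) :
    φ x ^ 2 ≤ (∫ y, φ y ^ 2) + ∫ y, deriv φ y ^ 2 := by
  have hd (y : ℝ) : HasDerivAt (fun z => φ z ^ 2) (2 * φ y * deriv φ y) y := by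
    simpa using (hφ.differentiable one_ne_zero y).hasDerivAt.fun_pow 2
  have hbound (y : ℝ) : |2 * φ y * deriv φ y| ≤ φ y ^ 2 + deriv φ y ^ 2 :=
    abs_le.mpr ⟨by nlinarith [sq_nonneg (φ y + deriv φ y)],
      by nlinarith [sq_nonneg (φ y - deriv φ y)]⟩
  have hint : Integrable fun y => 2 * φ y * deriv φ y := by
    have := hφ.continuous
    have := hφ.continuous_deriv le_rfl
    exact (h2.add h'2).mono' (by fun_prop) (ae_of_all _ hbound)
  -- `φ ^ 2` and its derivative are integrable, so `φ ^ 2` vanishes at `+∞`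
  have hFTC := integral_Ioi_of_hasDerivAt_of_tendsto' (a := x) (fun y _ => hd y) hint.integrableOn
    (tendsto_zero_of_hasDerivAt_of_integrableOn_Ioi (a := x) (fun y _ => hd y)
      hint.integrableOn h2.integrableOn)
  calc φ x ^ 2 = -∫ y in Ioi x, 2 * φ y * deriv φ y := by linarith
    _ ≤ ∫ y in Ioi x, |2 * φ y * deriv φ y| := (neg_le_abs _).trans abs_integral_le_integral_abs
    _ ≤ ∫ y, |2 * φ y * deriv φ y| :=
      setIntegral_le_integral hint.abs (ae_of_all _ fun _ => abs_nonneg _)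
    _ ≤ ∫ y, (φ y ^ 2 + deriv φ y ^ 2) := integral_mono hint.abs (h2.add h'2) hbound
    _ = _ := integral_add h2 h'2

theorem abs_le_of_sqrt_integral_sq_add_integral_deriv_sq_le {φ : ℝ → ℝ} {ε : ℝ}
    (hφ : ContDiff ℝ 1 φ) (h2 : Integrable fun x => φ x ^ 2)
    (h'2 : Integrable fun x => deriv φ x ^ 2)
    (hε : Real.sqrt ((∫ y, φ y ^ 2) + ∫ y, deriv φ y ^ 2) ≤ ε) (x : ℝ) : |φ x| ≤ ε := by
  rw [← Real.sqrt_sq_eq_abs]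
  exact (Real.sqrt_le_sqrt (sq_le_integral_sq_add_integral_deriv_sq hφ h2 h'2 x)).trans hε

theorem Monotone.intervalIntegral_deriv_le {f : ℝ → ℝ} {m M a b : ℝ} (hf : Monotone f)
    (hb : ∀ x, f x ∈ Icc m M) (hab : a ≤ b) : ∫ x in a..b, deriv f x ≤ M - m := by
  have h := (hf.monotoneOn (uIcc a b)).intervalIntegral_deriv_mem_uIcc
  rw [uIcc_of_le (sub_nonneg.2 (hf hab))] at h
  linarith [h.2, (hb b).2, (hb a).1]

theorem Monotone.integrable_deriv {f : ℝ → ℝ} {m M : ℝ} (hf : Monotone f)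
    (hb : ∀ x, f x ∈ Icc m M) : Integrable (deriv f) := by
  refine integrable_of_intervalIntegral_norm_bounded (M - m)
    (fun R => ((hf.monotoneOn _).intervalIntegrable_deriv (a := -R) (b := R)).def'.mono_set
      Ioc_subset_uIoc) tendsto_neg_atTop_atBot tendsto_id (eventually_ge_atTop 0 |>.mono ?_)
  intro R hR
  simp only [Real.norm_of_nonneg (hf.deriv_nonneg)]
  exact hf.intervalIntegral_deriv_le hb (by simpa using hR)

theorem Monotone.integral_deriv_le {f : ℝ → ℝ} {m M : ℝ} (hf : Monotone f)
    (hb : ∀ x, f x ∈ Icc m M) : ∫ x, deriv f x ≤ M - m :=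
  _root_.le_of_tendsto (intervalIntegral_tendsto_integral (hf.integrable_deriv hb)
    tendsto_neg_atTop_atBot tendsto_id)
    ((eventually_ge_atTop 0).mono fun R hR =>
      hf.intervalIntegral_deriv_le hb (by simp only [id]; linarith))

theorem Real.tanh_monotone : Monotone Real.tanh := fun x y hxy => by
  rwa [← Real.artanh_le_artanh_iff ⟨Real.neg_one_lt_tanh x, Real.tanh_lt_one x⟩
    ⟨Real.neg_one_lt_tanh y, Real.tanh_lt_one y⟩, Real.artanh_tanh, Real.artanh_tanh]

theorem average_add_mul_tanh_mem_Icc {a b : ℝ} (hab : a ≤ b) (x : ℝ) :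
    (b + a) / 2 + (b - a) / 2 * Real.tanh x ∈ Icc a b := by
  have h₁ := Real.neg_one_lt_tanh x
  have h₂ := Real.tanh_lt_one x
  constructor <;> nlinarith

theorem monotone_average_add_mul_tanh {a b : ℝ} (hab : a ≤ b) :
    Monotone fun x => (b + a) / 2 + (b - a) / 2 * Real.tanh x := fun x y hxy => by
  have : 0 ≤ (b - a) / 2 := by linarith
  simp only
  gcongr
  exact Real.tanh_monotone hxy

theorem monotone_characteristic_foot {w₀ x₀ : ℝ → ℝ} {s : ℝ} (hw₀ : Monotone w₀) (hs : 0 ≤ s)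
    (hx₀ : ∀ x, x = x₀ x + w₀ (x₀ x) * s) : Monotone x₀ := fun x y hxy => by
  have hF : StrictMono fun z => z + w₀ z * s := strictMono_id.add_monotone (hw₀.mul_const hs)
  rw [← hF.le_iff_le]
  simpa only [← hx₀] using hxy

theorem sqrt_mem_Icc_of_mem_Icc_sq {a b y : ℝ} (ha : 0 ≤ a) (hb : 0 ≤ b)
    (hy : y ∈ Icc (a ^ 2) (b ^ 2)) : √y ∈ Icc a b :=
  ⟨(Real.sqrt_sq ha).symm.le.trans (Real.sqrt_le_sqrt hy.1),
    (Real.sqrt_le_sqrt hy.2).trans (Real.sqrt_sq hb).le⟩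

theorem sqrt_rarefaction_speed_mem_Icc {um up : ℝ} {w₀ : ℝ → ℝ} (hum : 0 ≤ um) (hup : um ≤ up)
    (hw₀ : ∀ y, w₀ y = (3 * up ^ 2 + 3 * um ^ 2) / 2 + (3 * up ^ 2 - 3 * um ^ 2) / 2 * Real.tanh y)
    (y : ℝ) : √(w₀ y / 3) ∈ Icc um up := by
  obtain ⟨h₁, h₂⟩ := hw₀ y ▸ average_add_mul_tanh_mem_Icc (by nlinarith : 3 * um ^ 2 ≤ 3 * up ^ 2) y
  exact sqrt_mem_Icc_of_mem_Icc_sq hum (by linarith) ⟨by linarith, by linarith⟩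

theorem monotone_sqrt_rarefaction_speed_comp {um up s : ℝ} {w₀ x₀ : ℝ → ℝ} (hum : 0 ≤ um)
    (hup : um ≤ up)
    (hw₀ : ∀ y, w₀ y = (3 * up ^ 2 + 3 * um ^ 2) / 2 + (3 * up ^ 2 - 3 * um ^ 2) / 2 * Real.tanh y)
    (hs : 0 ≤ s) (hx₀ : ∀ x, x = x₀ x + w₀ (x₀ x) * s) :
    Monotone fun x => √(w₀ (x₀ x) / 3) := by
  have hw₀_mono : Monotone w₀ := fun x y hxy => by
    simpa only [hw₀] using monotone_average_add_mul_tanh (by nlinarith) hxy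
  exact fun x y hxy => Real.sqrt_le_sqrt (by
    gcongr; exact hw₀_mono (monotone_characteristic_foot hw₀_mono hs hx₀ hxy))

theorem hasDerivAt_ite_lt {f g f' g' : ℝ → ℝ} {a : ℝ} (hf : ∀ x, HasDerivAt f (f' x) x)
    (hg : ∀ x, HasDerivAt g (g' x) x) (ha : f a = g a) (ha' : f' a = g' a) (x : ℝ) :
    HasDerivAt (fun y => if y < a then f y else g y) (if x < a then f' x else g' x) x := by
  rcases lt_trichotomy x a with hx | rfl | hx
  · rw [if_pos hx]
    refine (hf x).congr_of_eventuallyEq ?_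
    filter_upwards [eventually_lt_nhds hx] with y hy using if_pos hy
  · rw [if_neg (lt_irrefl x), ← hasDerivWithinAt_univ, ← Iic_union_Ici]
    refine HasDerivWithinAt.union ?_ ?_
    · rw [← ha']
      refine (hf x).hasDerivWithinAt.congr (fun y hy => ?_) (by simp [ha])
      rcases (mem_Iic.1 hy).lt_or_eq with hy | rfl
      · exact if_pos hy
      · simp [ha]
    · exact (hg x).hasDerivWithinAt.congr (fun y hy => if_neg (not_lt.2 hy)) (by simp)
  · rw [if_neg (not_lt.2 hx.le)]
    refine (hg x).congr_of_eventuallyEq ?_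
    filter_upwards [eventually_gt_nhds hx] with y hy using if_neg (not_lt.2 hy.le)

noncomputable def weight (um s : ℝ) : ℝ :=
  if s < 0 then 5 / 2 * um * (um - s)
  else if s < um / 2 then 5 / (2 * um ^ 2) * (um - s) * (4 * s ^ 3 + um ^ 3)
  else 15 / 8 * um ^ 2

noncomputable def weightDeriv (um s : ℝ) : ℝ :=
  if s < 0 then -(5 / 2 * um)
  else if s < um / 2 then 5 / (2 * um ^ 2) * (-16 * s ^ 3 + 12 * um * s ^ 2 - um ^ 3)
  else 0

theorem hasDerivAt_weight {um : ℝ} (hum : 0 < um) (s : ℝ) :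
    HasDerivAt (weight um) (weightDeriv um s) s := by
  have hum0 : um ≠ 0 := hum.ne'
  have h0 : (0 : ℝ) < um / 2 := half_pos hum
  have hL (x : ℝ) : HasDerivAt (fun y => 5 / 2 * um * (um - y)) (-(5 / 2 * um)) x := by
    simpa using ((hasDerivAt_id x).const_sub um).const_mul (5 / 2 * um)
  have hM (x : ℝ) : HasDerivAt (fun y => 5 / (2 * um ^ 2) * (um - y) * (4 * y ^ 3 + um ^ 3))
      (5 / (2 * um ^ 2) * (-16 * x ^ 3 + 12 * um * x ^ 2 - um ^ 3)) x := by
    refine ((((hasDerivAt_id x).const_sub um).const_mul (5 / (2 * um ^ 2))).fun_mul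
      (((hasDerivAt_pow 3 x).const_mul 4).add_const (um ^ 3))).congr_deriv ?_
    simp only [id]
    push_cast
    ring
  have hR := hasDerivAt_ite_lt (a := um / 2) hM (fun x => hasDerivAt_const x (15 / 8 * um ^ 2))
    (by field_simp; ring) (by field_simp; ring)
  exact hasDerivAt_ite_lt (a := 0) hL hR (by simp only [if_pos h0]; field_simp; ring)
    (by simp only [if_pos h0]; field_simp; ring) s

theorem abs_weightDeriv_le {um : ℝ} (hum : 0 < um) (s : ℝ) : |weightDeriv um s| ≤ 5 / 2 * um := by
  unfold weightDeriv
  split_ifs with hs₀ hs₁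
  · rw [abs_neg, abs_of_pos (by positivity)]
  · rw [not_lt] at hs₀
    have hp : |-16 * s ^ 3 + 12 * um * s ^ 2 - um ^ 3| ≤ um ^ 3 := abs_le.2
      ⟨by nlinarith [mul_nonneg (mul_nonneg hs₀ hs₀) (sub_nonneg.2 hs₁.le)],
        by nlinarith [mul_nonneg (sq_nonneg (um - 2 * s)) hs₀]⟩
    rw [abs_mul, abs_of_pos (by positivity)]
    calc 5 / (2 * um ^ 2) * |-16 * s ^ 3 + 12 * um * s ^ 2 - um ^ 3|
        ≤ 5 / (2 * um ^ 2) * um ^ 3 := by gcongr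
      _ = 5 / 2 * um := by field_simp
  · simp only [abs_zero]
    positivity

theorem weight_nonneg {um : ℝ} (hum : 0 < um) (s : ℝ) : 0 ≤ weight um s := by
  unfold weight
  split_ifs with hs₀ hs₁
  · nlinarith
  · rw [not_lt] at hs₀
    have : 0 ≤ um - s := by linarith
    positivity
  · positivity

theorem weight_le {um s : ℝ} (hum : 0 < um) (hs : -(2 * um) ≤ s) :
    weight um s ≤ 15 / 2 * um ^ 2 := by
  unfold weight
  split_ifs with hs₀ hs₁
  · nlinarith
  · rw [not_lt] at hs₀
    have hcube : s ^ 3 ≤ (um / 2) ^ 3 := pow_le_pow_left₀ hs₀ hs₁.le 3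
    rw [div_mul_eq_mul_div, div_mul_eq_mul_div, div_le_iff₀ (by positivity)]
    nlinarith [mul_le_mul_of_nonneg_left hcube (by linarith : 0 ≤ um - s), pow_pos hum 3]
  · nlinarith

theorem deriv_weight {um : ℝ} (hum : 0 < um) : deriv (weight um) = weightDeriv um :=
  funext fun s => (hasDerivAt_weight hum s).deriv

theorem continuous_weight {um : ℝ} (hum : 0 < um) : Continuous (weight um) :=
  continuous_iff_continuousAt.2 fun s => (hasDerivAt_weight hum s).continuousAt

theorem abs_integral_le_mul_integral_of_eq_mul {f c g : ℝ → ℝ} {k : ℝ} (hg : Integrable g)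
    (hg0 : ∀ x, 0 ≤ g x) (hc : ∀ x, |c x| ≤ k) (hf : ∀ x, f x = c x * g x) :
    |∫ x, f x| ≤ k * ∫ x, g x := by
  rw [← integral_const_mul, ← Real.norm_eq_abs]
  refine norm_integral_le_of_norm_le (hg.const_mul k) (ae_of_all _ fun x => ?_)
  rw [hf, Real.norm_eq_abs, abs_mul, abs_of_nonneg (hg0 x)]
  exact mul_le_mul_of_nonneg_right (hc x) (hg0 x)

theorem abs_mul_integral_le_young {φ g : ℝ → ℝ} {δ : ℝ} (hg : Integrable g) (hg0 : ∀ x, 0 ≤ g x)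
    (hφg : Integrable fun x => φ x ^ 2 * g x) (hδ : 0 < δ) (X : ℝ) :
    |X * ∫ x, φ x * g x| ≤ X ^ 2 / (4 * δ) * (∫ x, g x) + δ * ∫ x, φ x ^ 2 * g x := by
  rw [← integral_const_mul, ← integral_const_mul, ← integral_const_mul,
    ← integral_add (hg.const_mul _) (hφg.const_mul _), ← Real.norm_eq_abs]
  refine norm_integral_le_of_norm_le ((hg.const_mul _).add (hφg.const_mul _))
    (ae_of_all _ fun x => ?_)
  have young : |X * φ x| ≤ X ^ 2 / (4 * δ) + δ * φ x ^ 2 := by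
    rw [div_add' _ _ _ (by positivity), le_div_iff₀ (by positivity), abs_mul, ← sq_abs X,
      ← sq_abs (φ x)]
    nlinarith [sq_nonneg (|X| - 2 * δ * |φ x|)]
  rw [Real.norm_eq_abs, ← mul_assoc, abs_mul, abs_of_nonneg (hg0 x)]
  nlinarith [mul_le_mul_of_nonneg_right young (hg0 x)]

theorem abs_mul_le_mul_of_abs_le {a b A B : ℝ} (ha : |a| ≤ A) (hb : |b| ≤ B) : |a * b| ≤ A * B :=
  norm_mul_le_of_le (a₁ := a) (a₂ := b) ha hb

section ShockRarefactionTerms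

variable {um up ε : ℝ} {φ W u' v' : ℝ → ℝ}

theorem abs_shift_speed_le (hum : 0 < um) (hu'0 : ∀ x, 0 ≤ u' x) (hu' : Integrable u')
    (hu'_le : ∫ x, u' x ≤ 3 * um) (hφW : ∀ x, |φ x * W x| ≤ ε * (15 / 2 * um ^ 2)) :
    |32 / (25 * um ^ 2) * ∫ x, φ x * W x * u' x| ≤ 144 / 5 * um * ε := by
  rw [abs_mul, abs_of_pos (by positivity)]
  calc 32 / (25 * um ^ 2) * |∫ x, φ x * W x * u' x|
      ≤ 32 / (25 * um ^ 2) * (ε * (15 / 2 * um ^ 2) * (3 * um)) := by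
        gcongr
        exact (abs_integral_le_mul_integral_of_eq_mul hu' hu'0 hφW fun x => rfl).trans
          (mul_le_mul_of_nonneg_left hu'_le ((abs_nonneg _).trans (hφW 0)))
    _ = 144 / 5 * um * ε := by field_simp; ring

theorem abs_mul_integral_weight_mul_le (hup : um < up)
    (hW_mem : ∀ x, W x ∈ Icc 0 (15 / 2 * um ^ 2)) (hv'0 : ∀ x, 0 ≤ v' x) (hv' : Integrable v')
    (hv'_le : ∫ x, v' x ≤ up - um) (hWv : Integrable fun x => W x * v' x)
    (hIv : Integrable fun x => φ x ^ 2 * W x * v' x) (X : ℝ) :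
    |X * ∫ x, φ x * W x * v' x|
      ≤ 25 / 128 * um ^ 2 * X ^ 2 + 48 / 5 * (up - um) * ∫ x, φ x ^ 2 * W x * v' x := by
  have hdR : 0 < up - um := sub_pos.2 hup
  -- `δ = 48 δ_R / 5` turns `X² / (4δ) · (15/2) u_m² δ_R` into `25 u_m² X² / 128`
  have h := abs_mul_integral_le_young (φ := φ) hWv (fun x => mul_nonneg (hW_mem x).1 (hv'0 x))
    (by simpa only [← mul_assoc] using hIv) (δ := 48 / 5 * (up - um)) (by positivity) X
  simp only [← mul_assoc] at h
  refine h.trans (add_le_add_left ?_ _)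
  have hWv_le : ∫ x, W x * v' x ≤ 15 / 2 * um ^ 2 * (up - um) :=
    (integral_mono hWv (hv'.const_mul _) fun x =>
      mul_le_mul_of_nonneg_right (hW_mem x).2 (hv'0 x)).trans (by rw [integral_const_mul]; gcongr)
  calc X ^ 2 / (4 * (48 / 5) * (up - um)) * ∫ x, W x * v' x
      ≤ X ^ 2 / (4 * (48 / 5) * (up - um)) * (15 / 2 * um ^ 2 * (up - um)) := by gcongr
    _ = 25 / 128 * um ^ 2 * X ^ 2 := by field_simp; ring

theorem abs_integral_cube_mul_le {K : ℝ} (hφ : Continuous φ) (hφε : ∀ x, |φ x| ≤ ε)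
    (hW : Continuous W) (hφW : ∀ x, |φ x * W x| ≤ ε * K)
    (hI2 : Integrable fun x => φ x ^ 2 * u' x) (hI2_0 : ∀ x, 0 ≤ φ x ^ 2 * u' x)
    (hIv : Integrable fun x => φ x ^ 2 * W x * v' x) (hIv_0 : ∀ x, 0 ≤ φ x ^ 2 * W x * v' x) :
    |∫ x, φ x ^ 3 * W x * (u' x + v' x)|
      ≤ ε * K * (∫ x, φ x ^ 2 * u' x) + ε * ∫ x, φ x ^ 2 * W x * v' x := by
  have h₁ : Integrable fun x => φ x * W x * (φ x ^ 2 * u' x) :=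
    hI2.bdd_mul (hφ.mul hW).aestronglyMeasurable (ae_of_all _ hφW)
  have h₂ : Integrable fun x => φ x * (φ x ^ 2 * W x * v' x) :=
    hIv.bdd_mul hφ.aestronglyMeasurable (ae_of_all _ hφε)
  have hsplit : ∫ x, φ x ^ 3 * W x * (u' x + v' x)
      = (∫ x, φ x * W x * (φ x ^ 2 * u' x)) + ∫ x, φ x * (φ x ^ 2 * W x * v' x) := by
    rw [← integral_add h₁ h₂]
    congr 1; ext x; ring
  rw [hsplit]
  exact (abs_add_le _ _).trans (add_le_add
    (abs_integral_le_mul_integral_of_eq_mul hI2 hI2_0 hφW fun x => rfl)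
    (abs_integral_le_mul_integral_of_eq_mul hIv hIv_0 hφε fun x => rfl))

end ShockRarefactionTerms

theorem abs_weightDeriv_terms_le {um up ε X : ℝ} {φ u u' v w' : ℝ → ℝ} (hum : 0 < um)
    (hu_mem : ∀ x, u x ∈ Ioo (-(2 * um)) um) (hv_mem : ∀ x, v x ∈ Icc um up)
    (hφε : ∀ x, |φ x| ≤ ε) (hw' : ∀ s, |w' s| ≤ 5 / 2 * um) (hX : |X| ≤ 144 / 5 * um * ε)
    (hI2 : Integrable fun x => φ x ^ 2 * u' x) (hI2_0 : ∀ x, 0 ≤ φ x ^ 2 * u' x) :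
    |X / 2 * (∫ x, φ x ^ 2 * w' (u x) * u' x)
        + 2 * (∫ x, φ x ^ 3 * (u x + v x - um) * w' (u x) * u' x)
        + 3 * (∫ x, φ x ^ 2 * (v x - um) * u x * w' (u x) * u' x)|
      ≤ (46 * um ^ 2 * ε + 5 * um * (up - um) * ε + 15 * um ^ 2 * (up - um))
        * ∫ x, φ x ^ 2 * u' x := by
  set I2 := ∫ x, φ x ^ 2 * u' x
  have hterm {a A k : ℝ} {f : ℝ → ℝ} (c : ℝ → ℝ) (ha : |a| ≤ A) (hc : ∀ x, |c x| ≤ k)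
      (hf : ∀ x, f x = c x * (φ x ^ 2 * u' x)) : |a * ∫ x, f x| ≤ A * (k * I2) :=
    abs_mul_le_mul_of_abs_le ha (abs_integral_le_mul_integral_of_eq_mul hI2 hI2_0 hc hf)
  have hbounds (x : ℝ) : |u x + v x - um| ≤ up + um ∧ |v x - um| ≤ up - um ∧ |u x| ≤ 2 * um := by
    obtain ⟨hu₁, hu₂⟩ := hu_mem x
    obtain ⟨hv₁, hv₂⟩ := hv_mem x
    refine ⟨abs_le.2 ⟨?_, ?_⟩, abs_le.2 ⟨?_, ?_⟩, abs_le.2 ⟨?_, ?_⟩⟩ <;> linarith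
  have hB : |X / 2 * ∫ x, φ x ^ 2 * w' (u x) * u' x| ≤ 144 / 5 * um * ε / 2 * (5 / 2 * um * I2) :=
    hterm (fun x => w' (u x)) (by rw [abs_div, abs_two]; linarith) (fun x => hw' _)
      (fun x => by ring)
  have hD : |2 * ∫ x, φ x ^ 3 * (u x + v x - um) * w' (u x) * u' x|
      ≤ 2 * (ε * (up + um) * (5 / 2 * um) * I2) :=
    hterm (fun x => φ x * (u x + v x - um) * w' (u x)) abs_two.le
      (fun x => abs_mul_le_mul_of_abs_le (abs_mul_le_mul_of_abs_le (hφε x) (hbounds x).1) (hw' _))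
      (fun x => by ring)
  have hE : |3 * ∫ x, φ x ^ 2 * (v x - um) * u x * w' (u x) * u' x|
      ≤ 3 * ((up - um) * (2 * um) * (5 / 2 * um) * I2) :=
    hterm (fun x => (v x - um) * u x * w' (u x)) (abs_of_pos three_pos).le
      (fun x => abs_mul_le_mul_of_abs_le
        (abs_mul_le_mul_of_abs_le (hbounds x).2.1 (hbounds x).2.2) (hw' _))
      (fun x => by ring)
  refine ((abs_add_le _ _).trans (add_le_add_left (abs_add_le _ _) _)).trans ?_
  linarith

theorem abs_cubic_cross_terms_le {um up ε X : ℝ} {φ u u' v v' w w' : ℝ → ℝ}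
    (hum : 0 < um) (hup : um < up) (hφ : Continuous φ) (hφε : ∀ x, |φ x| ≤ ε)
    (hu_mem : ∀ x, u x ∈ Ioo (-(2 * um)) um) (hu'0 : ∀ x, 0 ≤ u' x) (hu' : Integrable u')
    (hu'_le : ∫ x, u' x ≤ 3 * um) (hv_mem : ∀ x, v x ∈ Icc um up) (hv'0 : ∀ x, 0 ≤ v' x)
    (hv' : Integrable v') (hv'_le : ∫ x, v' x ≤ up - um)
    (hW : Continuous fun x => w (u x)) (hW_mem : ∀ x, w (u x) ∈ Icc 0 (15 / 2 * um ^ 2))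
    (hw' : ∀ s, |w' s| ≤ 5 / 2 * um)
    (hX : X = 32 / (25 * um ^ 2) * ∫ x, φ x * w (u x) * u' x) :
    |X * (∫ x, φ x * w (u x) * v' x)
        - (X / 2) * (∫ x, (φ x) ^ 2 * w' (u x) * u' x)
        + (∫ x, (φ x) ^ 3 * w (u x) * (u' x + v' x))
        - 2 * (∫ x, (φ x) ^ 3 * (u x + v x - um) * w' (u x) * u' x)
        - 3 * (∫ x, (φ x) ^ 2 * (v x - um) * u x * w' (u x) * u' x)|
      ≤ (36 * √2 + 35 * √2 / 2) * um ^ 2 * ε * (∫ x, (φ x) ^ 2 * u' x)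
        + (5 * √2 * um * (up - um) * ε + 15 * um ^ 2 * (up - um)) * (∫ x, (φ x) ^ 2 * u' x)
        + (√2 * ε + (48 / 5) * (up - um)) * (∫ x, (φ x) ^ 2 * w (u x) * v' x)
        + (25 / 128) * um ^ 2 * X ^ 2 := by
  have hε : 0 ≤ ε := (abs_nonneg _).trans (hφε 0)
  have hφ2 (x : ℝ) : |φ x ^ 2| ≤ ε ^ 2 := by
    rw [abs_pow]
    exact pow_le_pow_left₀ (abs_nonneg _) (hφε x) 2
  have hWabs (x : ℝ) : |w (u x)| ≤ 15 / 2 * um ^ 2 := by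
    rw [abs_of_nonneg (hW_mem x).1]
    exact (hW_mem x).2
  have hφW (x : ℝ) : |φ x * w (u x)| ≤ ε * (15 / 2 * um ^ 2) :=
    abs_mul_le_mul_of_abs_le (hφε x) (hWabs x)
  have hI2 : Integrable fun x => φ x ^ 2 * u' x :=
    hu'.bdd_mul (hφ.pow 2).aestronglyMeasurable (ae_of_all _ hφ2)
  have hIv : Integrable fun x => φ x ^ 2 * w (u x) * v' x :=
    hv'.bdd_mul ((hφ.pow 2).mul hW).aestronglyMeasurable
      (ae_of_all _ fun x => abs_mul_le_mul_of_abs_le (hφ2 x) (hWabs x))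
  have hI2_0 (x : ℝ) : 0 ≤ φ x ^ 2 * u' x := mul_nonneg (sq_nonneg _) (hu'0 x)
  have hIv_0 (x : ℝ) : 0 ≤ φ x ^ 2 * w (u x) * v' x :=
    mul_nonneg (mul_nonneg (sq_nonneg _) (hW_mem x).1) (hv'0 x)
  set I2 := ∫ x, φ x ^ 2 * u' x
  set Iv := ∫ x, φ x ^ 2 * w (u x) * v' x
  have hI2_nonneg : 0 ≤ I2 := integral_nonneg hI2_0
  have hIv_nonneg : 0 ≤ Iv := integral_nonneg hIv_0
  have hX_le : |X| ≤ 144 / 5 * um * ε := hX ▸ abs_shift_speed_le hum hu'0 hu' hu'_le hφW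
  have hA : |X * ∫ x, φ x * w (u x) * v' x|
      ≤ 25 / 128 * um ^ 2 * X ^ 2 + 48 / 5 * (up - um) * Iv :=
    abs_mul_integral_weight_mul_le hup hW_mem hv'0 hv' hv'_le
      (hv'.bdd_mul hW.aestronglyMeasurable (ae_of_all _ hWabs)) hIv X
  have hC : |∫ x, φ x ^ 3 * w (u x) * (u' x + v' x)| ≤ ε * (15 / 2 * um ^ 2) * I2 + ε * Iv :=
    abs_integral_cube_mul_le hφ hφε hW hφW hI2 hI2_0 hIv hIv_0
  have hBDE := abs_weightDeriv_terms_le (v := v) hum hu_mem hv_mem hφε hw' hX_le hI2 hI2_0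
  have hsqrt2 := Real.one_lt_sqrt_two
  have h₁ : 0 ≤ (√2 - 1) * (um ^ 2 * ε * I2) := by positivity
  have h₂ : 0 ≤ (√2 - 1) * (um * (up - um) * ε * I2) := by
    have := sub_pos.2 hup
    positivity
  have h₃ : 0 ≤ (√2 - 1) * (ε * Iv) := by positivity
  rw [abs_le] at hA hC hBDE ⊢
  constructor <;> linarith

theorem N_estimate_general
    (μ uminus um σ : ℝ) (hμ : 0 < μ) (huminus : uminus < 0)
    (hum : um = -uminus / 2)
    (uS : ℝ → ℝ) (huS : ContDiff ℝ 1 uS)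
    (hrange : ∀ ξ, uS ξ ∈ Set.Ioo uminus um)
    (hODE : ∀ ξ, μ * deriv uS ξ = (uS ξ - uminus) * (uS ξ - um) ^ 2)
    (w : ℝ → ℝ)
    (hw : ∀ s, w s = if s < 0 then (5 / 2) * um * (um - s)
        else if s < um / 2 then (5 / (2 * um ^ 2)) * (um - s) * (4 * s ^ 3 + um ^ 3)
        else (15 / 8) * um ^ 2)
    (up lm lp dR : ℝ) (hup : um < up)
    (hlm : lm = 3 * um ^ 2) (hlp : lp = 3 * up ^ 2) (hdR : dR = up - um)
    (w0 : ℝ → ℝ) (hw0 : ∀ x, w0 x = (lp + lm) / 2 + (lp - lm) / 2 * Real.tanh x)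
    (x0 : ℝ → ℝ → ℝ) (hx0 : ∀ s, 0 ≤ s → ∀ x, x = x0 s x + w0 (x0 s x) * s)
    (uR : ℝ → ℝ → ℝ) (huR : ∀ s x, uR s x = Real.sqrt (w0 (x0 s x) / 3))
    (t : ℝ) (ht : 0 ≤ t)
    (v : ℝ → ℝ) (hv : ∀ ξ, v ξ = uR (1 + t) (ξ + σ * t))
    (ε : ℝ)
    (φ : ℝ → ℝ) (hφ : ContDiff ℝ 1 φ)
    (hφ2 : Integrable (fun ξ => (φ ξ) ^ 2))
    (hφ'2 : Integrable (fun ξ => (deriv φ ξ) ^ 2))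
    (hφH1 : Real.sqrt ((∫ ξ, (φ ξ) ^ 2) + ∫ ξ, (deriv φ ξ) ^ 2) ≤ ε)
    (Xdot : ℝ)
    (hX : Xdot = (32 / (25 * um ^ 2)) * ∫ ξ, φ ξ * w (uS ξ) * deriv uS ξ)
    (N : ℝ)
    (hN : N = Xdot * (∫ ξ, φ ξ * w (uS ξ) * deriv v ξ)
        - (Xdot / 2) * (∫ ξ, (φ ξ) ^ 2 * deriv w (uS ξ) * deriv uS ξ)
        + (∫ ξ, (φ ξ) ^ 3 * w (uS ξ) * (deriv uS ξ + deriv v ξ))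
        - 2 * (∫ ξ, (φ ξ) ^ 3 * (uS ξ + v ξ - um) * deriv w (uS ξ) * deriv uS ξ)
        - 3 * (∫ ξ, (φ ξ) ^ 2 * (v ξ - um) * uS ξ * deriv w (uS ξ) * deriv uS ξ)) :
    |N| ≤ (36 * Real.sqrt 2 + 35 * Real.sqrt 2 / 2) * um ^ 2 * ε
            * (∫ ξ, (φ ξ) ^ 2 * deriv uS ξ)
        + (5 * Real.sqrt 2 * um * dR * ε + 15 * um ^ 2 * dR)
            * (∫ ξ, (φ ξ) ^ 2 * deriv uS ξ)
        + (Real.sqrt 2 * ε + (48 / 5) * dR) * (∫ ξ, (φ ξ) ^ 2 * w (uS ξ) * deriv v ξ)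
        + (25 / 128) * um ^ 2 * Xdot ^ 2 := by
  have hum0 : 0 < um := by linarith
  obtain rfl : uminus = -(2 * um) := by linarith
  obtain rfl : w = weight um := funext hw
  subst hlm hlp hdR
  have hu'0 (ξ : ℝ) : 0 ≤ deriv uS ξ := (mul_nonneg_iff_of_pos_left hμ).1 <| (hODE ξ).symm ▸
    mul_nonneg (by linarith [(hrange ξ).1]) (sq_nonneg _)
  have hu_mono : Monotone uS := monotone_of_deriv_nonneg (huS.differentiable one_ne_zero) hu'0
  have hu_mem (ξ : ℝ) : uS ξ ∈ Icc (-(2 * um)) um := Ioo_subset_Icc_self (hrange ξ)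
  obtain rfl : v = fun ξ => √(w0 (x0 (1 + t) (ξ + σ * t)) / 3) :=
    funext fun ξ => (hv ξ).trans (huR _ _)
  have hv_mono := (monotone_sqrt_rarefaction_speed_comp hum0.le hup.le hw0 (by linarith)
    (hx0 (1 + t) (by linarith))).comp (monotone_id.add_const (σ * t))
  have hv_mem (ξ : ℝ) := sqrt_rarefaction_speed_mem_Icc hum0.le hup.le hw0 (x0 (1 + t) (ξ + σ * t))
  rw [hN, deriv_weight hum0]
  exact abs_cubic_cross_terms_le hum0 hup hφ.continuous
    (abs_le_of_sqrt_integral_sq_add_integral_deriv_sq_le hφ hφ2 hφ'2 hφH1) hrange hu'0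
    (hu_mono.integrable_deriv hu_mem) (by linarith [hu_mono.integral_deriv_le hu_mem]) hv_mem
    (fun _ => hv_mono.deriv_nonneg) (hv_mono.integrable_deriv hv_mem)
    (hv_mono.integral_deriv_le hv_mem) ((continuous_weight hum0).comp huS.continuous)
    (fun ξ => ⟨weight_nonneg hum0 _, weight_le hum0 (hrange ξ).1.le⟩)
    (abs_weightDeriv_le hum0) hX

/-- Estimate of the cubic and cross terms `N(t)` (Lemma 4.6). -/
theorem N_estimate
    (μ uminus um σ : ℝ) (hμ : 0 < μ) (huminus : uminus < 0)
    (hum : um = -uminus / 2) (hσ : σ = 3 * um ^ 2)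
    (uS : ℝ → ℝ) (huS : ContDiff ℝ 1 uS)
    (hrange : ∀ ξ, uS ξ ∈ Set.Ioo uminus um)
    (hODE : ∀ ξ, μ * deriv uS ξ = (uS ξ - uminus) * (uS ξ - um) ^ 2)
    (hbot : Tendsto uS atBot (nhds uminus))
    (htop : Tendsto uS atTop (nhds um))
    (w : ℝ → ℝ)
    (hw : ∀ s, w s = if s < 0 then (5 / 2) * um * (um - s)
        else if s < um / 2 then (5 / (2 * um ^ 2)) * (um - s) * (4 * s ^ 3 + um ^ 3)
        else (15 / 8) * um ^ 2)
    (up lm lp dR : ℝ) (hup : um < up)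
    (hlm : lm = 3 * um ^ 2) (hlp : lp = 3 * up ^ 2) (hdR : dR = up - um)
    (w0 : ℝ → ℝ) (hw0 : ∀ x, w0 x = (lp + lm) / 2 + (lp - lm) / 2 * Real.tanh x)
    (x0 : ℝ → ℝ → ℝ) (hx0 : ∀ s, 0 ≤ s → ∀ x, x = x0 s x + w0 (x0 s x) * s)
    (uR : ℝ → ℝ → ℝ) (huR : ∀ s x, uR s x = Real.sqrt (w0 (x0 s x) / 3))
    (t : ℝ) (ht : 0 ≤ t)
    (v : ℝ → ℝ) (hv : ∀ ξ, v ξ = uR (1 + t) (ξ + σ * t))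
    (ε : ℝ) (hε : 0 < ε)
    (φ : ℝ → ℝ) (hφ : ContDiff ℝ 1 φ)
    (hφ2 : Integrable (fun ξ => (φ ξ) ^ 2))
    (hφ'2 : Integrable (fun ξ => (deriv φ ξ) ^ 2))
    (hφH1 : Real.sqrt ((∫ ξ, (φ ξ) ^ 2) + ∫ ξ, (deriv φ ξ) ^ 2) ≤ ε)
    (Xdot : ℝ)
    (hX : Xdot = (32 / (25 * um ^ 2)) * ∫ ξ, φ ξ * w (uS ξ) * deriv uS ξ)
    (N : ℝ)
    (hN : N = Xdot * (∫ ξ, φ ξ * w (uS ξ) * deriv v ξ)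
        - (Xdot / 2) * (∫ ξ, (φ ξ) ^ 2 * deriv w (uS ξ) * deriv uS ξ)
        + (∫ ξ, (φ ξ) ^ 3 * w (uS ξ) * (deriv uS ξ + deriv v ξ))
        - 2 * (∫ ξ, (φ ξ) ^ 3 * (uS ξ + v ξ - um) * deriv w (uS ξ) * deriv uS ξ)
        - 3 * (∫ ξ, (φ ξ) ^ 2 * (v ξ - um) * uS ξ * deriv w (uS ξ) * deriv uS ξ)) :
    |N| ≤ (36 * Real.sqrt 2 + 35 * Real.sqrt 2 / 2) * um ^ 2 * ε
            * (∫ ξ, (φ ξ) ^ 2 * deriv uS ξ)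
        + (5 * Real.sqrt 2 * um * dR * ε + 15 * um ^ 2 * dR)
            * (∫ ξ, (φ ξ) ^ 2 * deriv uS ξ)
        + (Real.sqrt 2 * ε + (48 / 5) * dR) * (∫ ξ, (φ ξ) ^ 2 * w (uS ξ) * deriv v ξ)
        + (25 / 128) * um ^ 2 * Xdot ^ 2 :=
  N_estimate_general μ uminus um σ hμ huminus hum uS huS hrange hODE w hw up lm lp dR hup hlm hlp
    hdR w0 hw0 x0 hx0 uR huR t ht v hv ε φ hφ hφ2 hφ'2 hφH1 Xdot hX N hN
end
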